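/- Let n ≥ 2 and let p = (p_1,…,p_n) ∈ [0,1]^n with 0 ≤ p_1 ≤ p_2 ≤ … ≤ p_n ≤ 1. Then there exists a pairwise independent distribution θ with marginal vector p such that P_θ(∑_{i=1}^n c_i = n) = max( p_1·( ∑_{i=2}^n p_i − (n−2) ), 0 ). Consequently, the minimum of P_θ(∑_{i=1}^n c_i = n) over all pairwise independent distributions θ with marginal vector p equals max( p_1·( ∑_{i=2}^n p_i − (n−2) ), 0 ). -/
import Mathlib


open Finset

noncomputable section

/-- Probability that at least `k` of the `n` coordinates equal `1` under the pmf `θ` on `{0,1}^n`. -/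
def probGE (n : ℕ) (θ : (Fin n → Bool) → ℝ) (k : ℕ) : ℝ :=
  ∑ c ∈ Finset.univ.filter
      (fun c : Fin n → Bool => k ≤ (Finset.univ.filter (fun i => c i = true)).card), θ c

/-- Probability that all `n` coordinates equal `1` under the pmf `θ` on `{0,1}^n`. -/
def probAll (n : ℕ) (θ : (Fin n → Bool) → ℝ) : ℝ :=
  ∑ c ∈ Finset.univ.filter (fun c : Fin n → Bool => ∀ i, c i = true), θ c

/-- `θ` is a probability mass function on `{0,1}^n`. -/
def IsDist (n : ℕ) (θ : (Fin n → Bool) → ℝ) : Prop :=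
  (∀ c, 0 ≤ θ c) ∧ (∑ c, θ c = 1)

/-- Univariate marginal probability `P_θ(c_i = 1)`. -/
def Marg (n : ℕ) (θ : (Fin n → Bool) → ℝ) (i : Fin n) : ℝ :=
  ∑ c ∈ Finset.univ.filter (fun c : Fin n → Bool => c i = true), θ c

/-- Bivariate probability `P_θ(c_i = 1, c_j = 1)`. -/
def Biv (n : ℕ) (θ : (Fin n → Bool) → ℝ) (i j : Fin n) : ℝ :=
  ∑ c ∈ Finset.univ.filter (fun c : Fin n → Bool => c i = true ∧ c j = true), θ c

/-- `θ` is a pairwise independent distribution with marginal vector `p`. -/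
def PairwiseIndep (n : ℕ) (p : Fin n → ℝ) (θ : (Fin n → Bool) → ℝ) : Prop :=
  IsDist n θ ∧ (∀ i, Marg n θ i = p i) ∧
    (∀ i j : Fin n, i < j → Biv n θ i j = p i * p j)

namespace Stmt6Aux
variable {n : ℕ}

def bern (q : Fin n → ℝ) (c : Fin n → Bool) : ℝ := ∏ i, (if c i then q i else 1 - q i)

lemma sum_prod_bool (f : Fin n → Bool → ℝ) :
    ∑ c : Fin n → Bool, ∏ i, f i (c i) = ∏ i, (f i true + f i false) := by
  have := (Fintype.prod_sum f).symm
  simpa using this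

lemma bern_nonneg {q : Fin n → ℝ} (h0 : ∀ i, 0 ≤ q i) (h1 : ∀ i, q i ≤ 1) (c : Fin n → Bool) :
    0 ≤ bern q c := by
  apply Finset.prod_nonneg
  intro i _
  cases hc : c i <;> simp only [hc, if_true, if_false, Bool.false_eq_true]
  · linarith [h1 i]
  · exact h0 i

lemma bern_filter_sum (q : Fin n → ℝ) (T : Finset (Fin n)) :
    (∑ c ∈ univ.filter (fun c : Fin n → Bool => ∀ i ∈ T, c i = true), bern q c) = ∏ i ∈ T, q i := by
  rw [Finset.sum_filter]
  have key : ∀ c : Fin n → Bool,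
      (if (∀ i ∈ T, c i = true) then bern q c else 0)
        = ∏ i, (fun i (b : Bool) => (if b then q i else 1 - q i) * (if i ∈ T then (if b then (1:ℝ) else 0) else 1)) i (c i) := by
    intro c
    simp only []
    rw [Finset.prod_mul_distrib]
    have h2 : (∏ i, (if i ∈ T then (if c i then (1:ℝ) else 0) else 1))
        = ∏ i ∈ T, (if c i then (1:ℝ) else 0) := by
      rw [← Finset.prod_filter]
      congr 1
      simp
    have h3 : (∏ i ∈ T, (if c i then (1:ℝ) else 0)) = if (∀ i ∈ T, c i = true) then 1 else 0 := by
      rw [Finset.prod_boole]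
      simp
    rw [h2, h3, bern]
    split <;> simp
  rw [Finset.sum_congr rfl (fun c _ => key c),
    sum_prod_bool (fun i (b : Bool) => (if b then q i else 1 - q i) * (if i ∈ T then (if b then (1:ℝ) else 0) else 1))]
  have h4 : ∀ i : Fin n, ((if true then q i else 1 - q i) * (if i ∈ T then (if true then (1:ℝ) else 0) else 1)
      + (if false then q i else 1 - q i) * (if i ∈ T then (if false then (1:ℝ) else 0) else 1))
      = if i ∈ T then q i else 1 := by
    intro i
    by_cases hi : i ∈ T <;> simp [hi]
  rw [Finset.prod_congr rfl (fun i _ => h4 i)]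
  simp [Finset.prod_ite_mem]




lemma bern_sum (q : Fin n → ℝ) : ∑ c : Fin n → Bool, bern q c = 1 := by
  have h := bern_filter_sum q ∅
  simpa using h

lemma bern_marg (q : Fin n → ℝ) (i : Fin n) :
    ∑ c ∈ univ.filter (fun c : Fin n → Bool => c i = true), bern q c = q i := by
  have h := bern_filter_sum q {i}
  have he : univ.filter (fun c : Fin n → Bool => c i = true)
      = univ.filter (fun c : Fin n → Bool => ∀ k ∈ ({i} : Finset (Fin n)), c k = true) := by
    ext c; simp
  rw [he]
  simpa using h

lemma bern_biv (q : Fin n → ℝ) (i j : Fin n) (hij : i ≠ j) :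
    ∑ c ∈ univ.filter (fun c : Fin n → Bool => c i = true ∧ c j = true), bern q c = q i * q j := by
  have h := bern_filter_sum q {i, j}
  have he : univ.filter (fun c : Fin n → Bool => c i = true ∧ c j = true)
      = univ.filter (fun c : Fin n → Bool => ∀ k ∈ ({i, j} : Finset (Fin n)), c k = true) := by
    ext c; simp
  rw [he, h, Finset.prod_pair hij]

lemma bern_all (q : Fin n → ℝ) :
    ∑ c ∈ univ.filter (fun c : Fin n → Bool => ∀ i, c i = true), bern q c = ∏ i, q i := by
  have h := bern_filter_sum q univ
  have he : univ.filter (fun c : Fin n → Bool => ∀ i, c i = true)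
      = univ.filter (fun c : Fin n → Bool => ∀ k ∈ (univ : Finset (Fin n)), c k = true) := by
    ext c; simp
  rw [he, h]


lemma card_erase_real (hn : 2 ≤ n) (i₀ : Fin n) :
    (((univ.erase i₀) : Finset (Fin n)).card : ℝ) = (n : ℝ) - 1 := by
  rw [Finset.card_erase_of_mem (mem_univ _), Finset.card_univ, Fintype.card_fin]
  have h1n : 1 ≤ n := by omega
  push_cast [Nat.cast_sub h1n]
  ring

lemma lowerbound (n : ℕ) (hn : 2 ≤ n) (p : Fin n → ℝ) (i₀ : Fin n)
    (hi₀ : ∀ j, j ≠ i₀ → i₀ < j)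
    (θ : (Fin n → Bool) → ℝ) (hθ : PairwiseIndep n p θ) :
    p i₀ * ((∑ j ∈ univ.erase i₀, p j) - ((n:ℝ) - 2)) ≤ probAll n θ := by
  classical
  obtain ⟨⟨hnn, -⟩, hmarg, hbiv⟩ := hθ
  set E := univ.erase i₀ with hE
  have hcard : (E.card : ℝ) = (n : ℝ) - 1 := card_erase_real hn i₀
  have key : ∀ c : Fin n → Bool,
      (∑ j ∈ E, if c i₀ = true ∧ c j = true then θ c else 0)
        - ((n:ℝ) - 2) * (if c i₀ = true then θ c else 0)
      ≤ (if ∀ i, c i = true then θ c else 0) := by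
    intro c
    by_cases hc0 : c i₀ = true
    · by_cases hall : ∀ i, c i = true
      · rw [if_pos hall, if_pos hc0]
        have : ∀ j ∈ E, (if c i₀ = true ∧ c j = true then θ c else 0) = θ c := by
          intro j _; rw [if_pos ⟨hc0, hall j⟩]
        rw [Finset.sum_congr rfl this, Finset.sum_const, nsmul_eq_mul, hcard]
        nlinarith [hnn c]
      · rw [if_neg hall, if_pos hc0]
        push_neg at hall
        obtain ⟨k, hk⟩ := hall
        have hkne : k ≠ i₀ := fun h => hk (h ▸ hc0)
        have hkE : k ∈ E := Finset.mem_erase.mpr ⟨hkne, mem_univ _⟩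
        have hle : ∀ j ∈ E, (if c i₀ = true ∧ c j = true then θ c else 0)
            ≤ θ c - (if j = k then θ c else 0) := by
          intro j _
          rcases eq_or_ne j k with h | h
          · subst h
            rw [if_neg (fun hh => hk hh.2), if_pos rfl]
            simp
          · rw [if_neg h]
            split
            · simp
            · simpa using hnn c
        have := Finset.sum_le_sum hle
        rw [Finset.sum_sub_distrib, Finset.sum_const, Finset.sum_ite_eq' E k _, if_pos hkE,
          nsmul_eq_mul, hcard] at this
        nlinarith [hnn c]
    · have h1 : ∀ j ∈ E, (if c i₀ = true ∧ c j = true then θ c else 0) = 0 := by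
        intro j _; rw [if_neg (fun hh => hc0 hh.1)]
      have h2 : ¬ (∀ i, c i = true) := fun h => hc0 (h i₀)
      rw [Finset.sum_congr rfl h1, if_neg hc0, if_neg h2, Finset.sum_const_zero]
      simp
  have main := Finset.sum_le_sum (fun c (_ : c ∈ (univ : Finset (Fin n → Bool))) => key c)
  rw [Finset.sum_sub_distrib, ← Finset.mul_sum, Finset.sum_comm] at main
  have e1 : ∀ j ∈ E, (∑ c : Fin n → Bool, if c i₀ = true ∧ c j = true then θ c else 0)
      = p i₀ * p j := by
    intro j hj
    rw [← Finset.sum_filter]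
    exact hbiv i₀ j (hi₀ j (Finset.ne_of_mem_erase hj))
  have e2 : (∑ c : Fin n → Bool, if c i₀ = true then θ c else 0) = p i₀ := by
    rw [← Finset.sum_filter]; exact hmarg i₀
  have e3 : (∑ c : Fin n → Bool, if ∀ i, c i = true then θ c else 0) = probAll n θ := by
    rw [← Finset.sum_filter]; rfl
  rw [Finset.sum_congr rfl e1, e2, e3, ← Finset.mul_sum] at main
  calc p i₀ * ((∑ j ∈ E, p j) - ((n:ℝ) - 2))
      = p i₀ * (∑ j ∈ E, p j) - ((n:ℝ) - 2) * p i₀ := by ring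
    _ ≤ probAll n θ := main

lemma probAll_nonneg (n : ℕ) (θ : (Fin n → Bool) → ℝ) (h : ∀ c, 0 ≤ θ c) :
    0 ≤ probAll n θ :=
  Finset.sum_nonneg fun c _ => h c


lemma construction (n : ℕ) (hn : 2 ≤ n) (p q ρ β : Fin n → ℝ) (S : ℝ) (i₀ : Fin n)
    (hp0 : 0 ≤ p i₀) (hp1 : p i₀ ≤ 1) (hS : 0 ≤ S)
    (hq1 : ∀ j, j ≠ i₀ → q j ≤ 1)
    (hρ0 : ∀ j, j ≠ i₀ → 0 ≤ ρ j) (hρ1 : ∀ j, j ≠ i₀ → ρ j ≤ 1)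
    (hβ0 : ∀ j, j ≠ i₀ → 0 ≤ β j) (hβ1 : ∀ j, j ≠ i₀ → β j ≤ 1)
    (hρq : ∀ j, j ≠ i₀ → ρ j * q j = p j)
    (hβq : ∀ j, j ≠ i₀ → (1 - p i₀) * β j = q j - p i₀)
    (hsum : ∑ j ∈ univ.erase i₀, q j = (n:ℝ) - 2 + S) :
    ∃ θ, PairwiseIndep n p θ ∧ probAll n θ = p i₀ * S * ∏ j ∈ univ.erase i₀, ρ j := by
  classical
  set E := univ.erase i₀ with hE
  set rt : Fin n → ℝ := fun i => if i = i₀ then 1 else ρ i with hrt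
  set r1 : Fin n → Fin n → ℝ := fun j i => if i = i₀ then 1 else if i = j then 0 else ρ i with hr1
  set rz : Fin n → ℝ := fun i => if i = i₀ then 0 else ρ i with hrz
  set rB : Fin n → ℝ := fun i => if i = i₀ then 0 else β i * ρ i with hrB
  set θ : (Fin n → Bool) → ℝ := fun c =>
    p i₀ * S * bern rt c + (∑ j ∈ E, p i₀ * (1 - q j) * bern (r1 j) c)
      + (1 - p i₀) * p i₀ * bern rz c + (1 - p i₀)^2 * bern rB c with hθ
  have hcardE : (E.card : ℝ) = (n : ℝ) - 1 := by
    rw [hE, Finset.card_erase_of_mem (mem_univ _), Finset.card_univ, Fintype.card_fin]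
    have h1n : 1 ≤ n := by omega
    push_cast [Nat.cast_sub h1n]
    ring
  have hEsum : ∑ j ∈ E, (1 - q j) = 1 - S := by
    rw [Finset.sum_sub_distrib, hsum, Finset.sum_const, nsmul_eq_mul, hcardE]
    ring
  -- pointwise values of the parameter vectors
  have hrt0 : rt i₀ = 1 := by simp [hrt]
  have hrz0 : rz i₀ = 0 := by simp [hrz]
  have hrB0 : rB i₀ = 0 := by simp [hrB]
  have hr10 : ∀ j, r1 j i₀ = 1 := by intro j; simp [hr1]
  have hrti : ∀ i, i ≠ i₀ → rt i = ρ i := by intro i hi; simp [hrt, hi]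
  have hrzi : ∀ i, i ≠ i₀ → rz i = ρ i := by intro i hi; simp [hrz, hi]
  have hrBi : ∀ i, i ≠ i₀ → rB i = β i * ρ i := by intro i hi; simp [hrB, hi]
  have hr1i : ∀ j i, i ≠ i₀ → r1 j i = ρ i - (if j = i then ρ i else 0) := by
    intro j i hi
    rcases eq_or_ne j i with h | h
    · subst h; simp [hr1, hi]
    · simp [hr1, hi, h, h.symm]
  have expand : ∀ A : Finset (Fin n → Bool), ∑ c ∈ A, θ c
      = p i₀ * S * (∑ c ∈ A, bern rt c) + (∑ j ∈ E, p i₀ * (1 - q j) * (∑ c ∈ A, bern (r1 j) c))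
        + (1 - p i₀) * p i₀ * (∑ c ∈ A, bern rz c) + (1 - p i₀)^2 * (∑ c ∈ A, bern rB c) := by
    intro A
    rw [hθ]
    rw [Finset.sum_add_distrib, Finset.sum_add_distrib, Finset.sum_add_distrib]
    rw [← Finset.mul_sum, ← Finset.mul_sum, ← Finset.mul_sum, Finset.sum_comm]
    congr 1
    congr 1
    congr 1
    exact Finset.sum_congr rfl fun j _ => (Finset.mul_sum _ _ _).symm
  -- the middle sum with one distinguished coordinate
  have midsum : ∀ i, i ≠ i₀ → ∑ j ∈ E, p i₀ * (1 - q j) * r1 j i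
      = p i₀ * ρ i * (1 - S) - p i₀ * (1 - q i) * ρ i := by
    intro i hi
    have hiE : i ∈ E := by rw [hE]; exact Finset.mem_erase.mpr ⟨hi, mem_univ _⟩
    have step : ∀ j ∈ E, p i₀ * (1 - q j) * r1 j i
        = p i₀ * ρ i * (1 - q j) - (if j = i then p i₀ * (1 - q i) * ρ i else 0) := by
      intro j hj
      rw [hr1i j i hi]
      rcases eq_or_ne j i with h | h
      · subst h; simp; ring
      · simp [h]; ring
    rw [Finset.sum_congr rfl step, Finset.sum_sub_distrib, Finset.sum_ite_eq' E i _,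
      if_pos hiE, ← Finset.mul_sum, hEsum]
  refine ⟨θ, ⟨⟨?_, ?_⟩, ?_, ?_⟩, ?_⟩
  · -- nonneg
    intro c
    rw [hθ]
    have h1 : 0 ≤ bern rt c := by
      apply bern_nonneg <;> intro i <;> rw [hrt] <;> by_cases hi : i = i₀ <;> simp [hi]
      · exact hρ0 i hi
      · exact hρ1 i hi
    have h2 : ∀ j ∈ E, 0 ≤ p i₀ * (1 - q j) * bern (r1 j) c := by
      intro j hj
      have hjne : j ≠ i₀ := Finset.ne_of_mem_erase hj
      have hb : 0 ≤ bern (r1 j) c := by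
        apply bern_nonneg <;> intro i <;> rw [hr1] <;>
          by_cases hi : i = i₀ <;> simp [hi] <;> by_cases hij : i = j <;> simp [hij]
        · exact hρ0 i hi
        · exact hρ1 i hi
      have := hq1 j hjne
      exact mul_nonneg (mul_nonneg hp0 (by linarith)) hb
    have h3 : 0 ≤ bern rz c := by
      apply bern_nonneg <;> intro i <;> rw [hrz] <;> by_cases hi : i = i₀ <;> simp [hi]
      · exact hρ0 i hi
      · exact hρ1 i hi
    have h4 : 0 ≤ bern rB c := by
      apply bern_nonneg <;> intro i <;> rw [hrB] <;> by_cases hi : i = i₀ <;> simp [hi]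
      · exact mul_nonneg (hβ0 i hi) (hρ0 i hi)
      · exact mul_le_one₀ (hβ1 i hi) (hρ0 i hi) (hρ1 i hi)
    have h5 : 0 ≤ ∑ j ∈ E, p i₀ * (1 - q j) * bern (r1 j) c := Finset.sum_nonneg h2
    have w1 : 0 ≤ p i₀ * S * bern rt c := mul_nonneg (mul_nonneg hp0 hS) h1
    have w3 : 0 ≤ (1 - p i₀) * p i₀ * bern rz c :=
      mul_nonneg (mul_nonneg (by linarith) hp0) h3
    have w4 : 0 ≤ (1 - p i₀)^2 * bern rB c := mul_nonneg (sq_nonneg _) h4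
    show 0 ≤ p i₀ * S * bern rt c + (∑ j ∈ E, p i₀ * (1 - q j) * bern (r1 j) c)
      + (1 - p i₀) * p i₀ * bern rz c + (1 - p i₀)^2 * bern rB c
    linarith
  · -- total mass
    rw [show (∑ c, θ c) = ∑ c ∈ univ, θ c from rfl, expand univ]
    simp only [bern_sum, mul_one]
    rw [← Finset.mul_sum, hEsum]
    ring
  · -- marginals
    intro i
    rw [Marg, expand, bern_marg, bern_marg, bern_marg]
    rw [Finset.sum_congr rfl (fun j _ => by rw [bern_marg (r1 j) i])]
    rcases eq_or_ne i i₀ with hi | hi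
    · subst hi
      rw [hrt0, hrz0, hrB0,
        Finset.sum_congr rfl (fun j _ => by rw [hr10 j])]
      simp only [mul_one]
      have : ∑ j ∈ E, p i * (1 - q j) = p i * (1 - S) := by
        rw [← Finset.mul_sum, hEsum]
      rw [this]
      ring
    · rw [hrti i hi, hrzi i hi, hrBi i hi, midsum i hi]
      linear_combination ((1 - p i₀) * ρ i) * hβq i hi + hρq i hi
  · -- bivariate
    intro i j hij
    have hne : i ≠ j := Fin.ne_of_lt hij
    rw [Biv, expand, bern_biv rt i j hne, bern_biv rz i j hne, bern_biv rB i j hne]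
    rw [Finset.sum_congr rfl (fun k _ => by rw [bern_biv (r1 k) i j hne])]
    rcases eq_or_ne i i₀ with hi | hi
    · -- i = i₀, j ≠ i₀
      have hj : j ≠ i₀ := by rw [← hi]; exact hne.symm
      subst hi
      rw [hrt0, hrz0, hrB0, hrti j hj, hrzi j hj, hrBi j hj]
      have : ∑ k ∈ E, p i * (1 - q k) * (1 * r1 k j) = p i * ρ j * (1 - S) - p i * (1 - q j) * ρ j := by
        rw [Finset.sum_congr rfl (fun k _ => by rw [one_mul]), midsum j hj]
      rw [Finset.sum_congr rfl (fun k _ => by rw [hr10 k]), this]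
      linear_combination (p i) * hρq j hj
    · rcases eq_or_ne j i₀ with hj | hj
      · -- j = i₀, i ≠ i₀
        subst hj
        rw [hrt0, hrz0, hrB0, hrti i hi, hrzi i hi, hrBi i hi]
        have : ∑ k ∈ E, p j * (1 - q k) * (r1 k i * 1) = p j * ρ i * (1 - S) - p j * (1 - q i) * ρ i := by
          rw [Finset.sum_congr rfl (fun k _ => by rw [mul_one]), midsum i hi]
        rw [Finset.sum_congr rfl (fun k _ => by rw [hr10 k]), this]
        linear_combination (p j) * hρq i hi
      · -- both different from i₀
        rw [hrti i hi, hrzi i hi, hrBi i hi, hrti j hj, hrzi j hj, hrBi j hj]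
        have hiE : i ∈ E := by rw [hE]; exact Finset.mem_erase.mpr ⟨hi, mem_univ _⟩
        have hjE : j ∈ E := by rw [hE]; exact Finset.mem_erase.mpr ⟨hj, mem_univ _⟩
        have step : ∀ k ∈ E, p i₀ * (1 - q k) * (r1 k i * r1 k j)
            = p i₀ * (ρ i * ρ j) * (1 - q k) - (if k = i then p i₀ * (1 - q i) * (ρ i * ρ j) else 0)
              - (if k = j then p i₀ * (1 - q j) * (ρ i * ρ j) else 0) := by
          intro k hk
          rw [hr1i k i hi, hr1i k j hj]
          rcases eq_or_ne k i with h1 | h1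
          · subst h1
            have : k ≠ j := hne
            simp [this]; ring
          · rcases eq_or_ne k j with h2 | h2
            · subst h2; simp [h1]; ring
            · simp [h1, h2]; ring
        rw [Finset.sum_congr rfl step, Finset.sum_sub_distrib, Finset.sum_sub_distrib,
          Finset.sum_ite_eq' E i _, Finset.sum_ite_eq' E j _, if_pos hiE, if_pos hjE,
          ← Finset.mul_sum, hEsum]
        have hbi : (1 - p i₀) * β i * ((1 - p i₀) * β j) = (q i - p i₀) * (q j - p i₀) := by
          rw [hβq i hi, hβq j hj]
        linear_combination (ρ i * ρ j) * hbi + (ρ j * q j) * hρq i hi + (p i) * hρq j hj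
  · -- probAll
    rw [probAll, expand, bern_all, bern_all, bern_all]
    rw [Finset.sum_congr rfl (fun j _ => by rw [bern_all (r1 j)])]
    have h1 : ∏ i, rt i = ∏ j ∈ E, ρ j := by
      rw [← Finset.mul_prod_erase univ rt (mem_univ i₀), hrt0, one_mul, ← hE]
      exact Finset.prod_congr rfl fun i hiE => hrti i (Finset.ne_of_mem_erase hiE)
    have h2 : ∏ i, rz i = 0 := Finset.prod_eq_zero (mem_univ i₀) hrz0
    have h3 : ∏ i, rB i = 0 := Finset.prod_eq_zero (mem_univ i₀) hrB0
    have h4 : ∀ j ∈ E, ∏ i, r1 j i = 0 := by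
      intro j hj
      refine Finset.prod_eq_zero (mem_univ j) ?_
      rw [hr1]
      simp [Finset.ne_of_mem_erase hj]
    rw [h1, h2, h3, Finset.sum_congr rfl (fun j hj => by rw [h4 j hj])]
    simp


end Stmt6Aux

open Stmt6Aux in
theorem stmt_6 (n : ℕ) (hn : 2 ≤ n) (p : Fin n → ℝ)
    (hp0 : ∀ i, 0 ≤ p i) (hp1 : ∀ i, p i ≤ 1) (hmono : Monotone p) :
    IsLeast {x : ℝ | ∃ θ : (Fin n → Bool) → ℝ, PairwiseIndep n p θ ∧ probAll n θ = x}
      (max (p (⟨0, by omega⟩ : Fin n) *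
        ((∑ i ∈ Finset.univ.erase (⟨0, by omega⟩ : Fin n), p i) - ((n : ℝ) - 2))) 0) := by
  classical
  set i₀ : Fin n := ⟨0, by omega⟩ with hi₀def
  have hi₀lt : ∀ j : Fin n, j ≠ i₀ → i₀ < j := by
    intro j hj
    have h2 : (j : ℕ) ≠ 0 := by
      intro h
      exact hj (Fin.ext h)
    have h3 : (i₀ : ℕ) = 0 := rfl
    exact Fin.lt_def.mpr (by omega)
  have hi₀le : ∀ j : Fin n, p i₀ ≤ p j := by
    intro j
    exact hmono (by exact Fin.le_def.mpr (Nat.zero_le _))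
  set s : ℝ := (∑ i ∈ Finset.univ.erase i₀, p i) - ((n : ℝ) - 2) with hs_def
  have hcard : (((univ.erase i₀) : Finset (Fin n)).card : ℝ) = (n : ℝ) - 1 :=
    card_erase_real hn i₀
  constructor
  · -- membership
    rcases le_or_gt 0 s with hs | hs
    · -- case A
      have hmax : max (p i₀ * s) 0 = p i₀ * s := max_eq_left (mul_nonneg (hp0 i₀) hs)
      rw [hmax]
      obtain ⟨θ, hPI, hval⟩ := construction n hn p p (fun _ => 1)
        (fun j => (p j - p i₀) / (1 - p i₀)) s i₀
        (hp0 i₀) (hp1 i₀) hs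
        (fun j _ => hp1 j)
        (fun j _ => zero_le_one) (fun j _ => le_refl 1)
        (fun j hj => div_nonneg (by linarith [hi₀le j]) (by linarith [hp1 i₀]))
        (fun j hj => by
          rcases eq_or_lt_of_le (hp1 i₀) with h1 | h1
          · rw [h1]; simp
          · rw [div_le_one (by linarith)]
            linarith [hp1 j])
        (fun j _ => one_mul _)
        (fun j hj => by
          rcases eq_or_lt_of_le (hp1 i₀) with h1 | h1
          · have hpj : p j = 1 := le_antisymm (hp1 j) (h1 ▸ hi₀le j)
            rw [h1, hpj]
            norm_num
          · rw [mul_comm, div_mul_cancel₀ _ (by linarith : (1:ℝ) - p i₀ ≠ 0)])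
        (by rw [hs_def]; ring)
      exact ⟨θ, hPI, by rw [hval]; simp⟩
    · -- case B
      have hmax : max (p i₀ * s) 0 = 0 :=
        max_eq_right (mul_nonpos_iff.mpr (Or.inl ⟨hp0 i₀, le_of_lt hs⟩))
      rw [hmax]
      set U : ℝ := 1 - s with hUdef
      have hU : (1:ℝ) < U := by rw [hUdef]; linarith
      have hU0 : (0:ℝ) < U := by linarith
      have hsumu : ∑ j ∈ univ.erase i₀, (1 - p j) = U := by
        rw [Finset.sum_sub_distrib, Finset.sum_const, nsmul_eq_mul, hcard, hUdef, hs_def]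
        ring
      have hp1lt : p i₀ < 1 := by
        by_contra h
        push_neg at h
        have hall : ∀ j ∈ univ.erase i₀, p j = 1 :=
          fun j _ => le_antisymm (hp1 j) (le_trans h (hi₀le j))
        have hone : ∑ j ∈ univ.erase i₀, p j = (n:ℝ) - 1 := by
          rw [Finset.sum_congr rfl hall, Finset.sum_const, nsmul_eq_mul, hcard]
          ring
        rw [hs_def, hone] at hs
        linarith
      set q : Fin n → ℝ := fun j => 1 - (1 - p j)/U with hq
      have hqfact : ∀ j : Fin n, 0 < q j ∧ p j ≤ q j ∧ q j ≤ 1 := by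
        intro j
        have h1 : (0:ℝ) ≤ 1 - p j := by linarith [hp1 j]
        have h2 : (1 - p j)/U < 1 := (div_lt_one hU0).mpr (by linarith [hp0 j])
        have h3 : (1 - p j)/U ≤ 1 - p j := div_le_self h1 (le_of_lt hU)
        have h4 : (0:ℝ) ≤ (1 - p j)/U := div_nonneg h1 (le_of_lt hU0)
        refine ⟨by simp only [hq]; linarith, by simp only [hq]; linarith, by simp only [hq]; linarith⟩
      obtain ⟨θ, hPI, hval⟩ := construction n hn p q (fun j => p j / q j)
        (fun j => (q j - p i₀)/(1 - p i₀)) 0 i₀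
        (hp0 i₀) (hp1 i₀) le_rfl
        (fun j _ => (hqfact j).2.2)
        (fun j _ => div_nonneg (hp0 j) (le_of_lt (hqfact j).1))
        (fun j _ => (div_le_one (hqfact j).1).mpr (hqfact j).2.1)
        (fun j hj => div_nonneg (by linarith [(hqfact j).2.1, hi₀le j]) (by linarith))
        (fun j hj => (div_le_one (by linarith)).mpr (by linarith [(hqfact j).2.2]))
        (fun j _ => div_mul_cancel₀ _ (ne_of_gt (hqfact j).1))
        (fun j _ => by rw [mul_comm, div_mul_cancel₀ _ (by linarith : (1:ℝ) - p i₀ ≠ 0)])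
        (by
          simp only [hq]
          rw [Finset.sum_sub_distrib, Finset.sum_const, nsmul_eq_mul, hcard,
            ← Finset.sum_div, hsumu, div_self (ne_of_gt hU0)]
          ring)
      exact ⟨θ, hPI, by rw [hval]; ring⟩
  · -- lower bound
    rintro x ⟨θ, hPI, rfl⟩
    apply max_le
    · exact lowerbound n hn p i₀ hi₀lt θ hPI
    · exact probAll_nonneg n θ hPI.1.1
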